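/- arXiv:2412.05058 — 8 statements merged into one kernel-verified Lean document; each statement's English description precedes it below -/
import Mathlib

section
/- Let k₀ > 0, α ∈ (0, π), ψ ∈ [0, π], and φ' ∈ [0, α/2]. Then ω(ψ, φ') = k₀ · sin ψ · (1 − cos(α/2 + φ')). -/
open Real Set

/-- The maximum spatial frequency `F^max`: the supremum over γ ∈ [−α/2, α/2]
of sin ψ · cos (γ − φ'). -/
noncomputable def Fmax (α ψ φ' : ℝ) : ℝ :=
  sSup ((fun γ => Real.sin ψ * Real.cos (γ - φ')) '' Set.Icc (-(α / 2)) (α / 2))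

/-- The minimum spatial frequency `F^min`: the infimum over γ ∈ [−α/2, α/2]
of sin ψ · cos (γ − φ'). -/
noncomputable def Fmin (α ψ φ' : ℝ) : ℝ :=
  sInf ((fun γ => Real.sin ψ * Real.cos (γ - φ')) '' Set.Icc (-(α / 2)) (α / 2))

/-- The local spatial bandwidth ω(ψ, φ') = k₀ · (F^max − F^min). -/
noncomputable def omegaBW (k₀ α ψ φ' : ℝ) : ℝ :=
  k₀ * (Fmax α ψ φ' - Fmin α ψ φ')

/-- for k₀ > 0, α ∈ (0,π), ψ ∈ [0,π], φ' ∈ [0, α/2],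
ω(ψ, φ') = k₀ · sin ψ · (1 − cos(α/2 + φ')). -/
theorem omegaBW_eq_seg1 (k₀ α ψ φ' : ℝ) (hk : 0 < k₀) (hα : α ∈ Set.Ioo 0 π)
    (hψ : ψ ∈ Set.Icc 0 π) (hφ : φ' ∈ Set.Icc 0 (α / 2)) :
    omegaBW k₀ α ψ φ' = k₀ * Real.sin ψ * (1 - Real.cos (α / 2 + φ')) := by
  obtain ⟨hα0, hαπ⟩ := hα
  obtain ⟨hφ0, hφα⟩ := hφ
  have hs : 0 ≤ Real.sin ψ := Real.sin_nonneg_of_nonneg_of_le_pi hψ.1 hψ.2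
  have hsum_nonneg : 0 ≤ α / 2 + φ' := by linarith
  have hsum_le : α / 2 + φ' ≤ π := by linarith
  have hmax : IsGreatest ((fun γ => Real.sin ψ * Real.cos (γ - φ')) ''
      Set.Icc (-(α / 2)) (α / 2)) (Real.sin ψ) := by
    constructor
    · exact ⟨φ', ⟨by linarith, hφα⟩, by simp⟩
    · rintro x ⟨γ, hγ, rfl⟩
      have h : Real.cos (γ - φ') ≤ 1 := Real.cos_le_one _
      show Real.sin ψ * Real.cos (γ - φ') ≤ Real.sin ψ
      nlinarith
  have hmin : IsLeast ((fun γ => Real.sin ψ * Real.cos (γ - φ')) ''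
      Set.Icc (-(α / 2)) (α / 2)) (Real.sin ψ * Real.cos (α / 2 + φ')) := by
    constructor
    · refine ⟨-(α / 2), ⟨le_refl _, by linarith⟩, ?_⟩
      show Real.sin ψ * Real.cos (-(α / 2) - φ') = _
      have h : -(α / 2) - φ' = -(α / 2 + φ') := by ring
      rw [h, Real.cos_neg]
    · rintro x ⟨γ, hγ, rfl⟩
      have h1 : |γ - φ'| ≤ α / 2 + φ' := by
        rw [abs_le]; constructor <;> [linarith [hγ.1]; linarith [hγ.2]]
      have h2 : Real.cos (α / 2 + φ') ≤ Real.cos |γ - φ'| :=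
        Real.cos_le_cos_of_nonneg_of_le_pi (abs_nonneg _) hsum_le h1
      rw [Real.cos_abs] at h2
      exact mul_le_mul_of_nonneg_left h2 hs
  have e1 : Fmax α ψ φ' = Real.sin ψ := hmax.csSup_eq
  have e2 : Fmin α ψ φ' = Real.sin ψ * Real.cos (α / 2 + φ') :=
    hmin.csInf_eq
  rw [omegaBW, e1, e2]; ring
end

section
/- Let k₀ > 0, α ∈ (0, π), ψ ∈ [0, π], and φ' ∈ [α/2, π − α/2]. Then ω(ψ, φ') = 2 k₀ · sin ψ · sin(α/2) · sin φ'. -/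
open Real Set

/-- for k₀ > 0, α ∈ (0,π), ψ ∈ [0,π], φ' ∈ [α/2, π − α/2],
ω(ψ, φ') = 2 k₀ · sin ψ · sin(α/2) · sin φ'. -/
theorem omegaBW_eq_seg2 (k₀ α ψ φ' : ℝ) (hk : 0 < k₀) (hα : α ∈ Set.Ioo 0 π)
    (hψ : ψ ∈ Set.Icc 0 π) (hφ : φ' ∈ Set.Icc (α / 2) (π - α / 2)) :
    omegaBW k₀ α ψ φ' = 2 * k₀ * Real.sin ψ * Real.sin (α / 2) * Real.sin φ' := by
  obtain ⟨hα0, hαπ⟩ := hα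
  obtain ⟨hφ1, hφ2⟩ := hφ
  have hs : 0 ≤ Real.sin ψ := Real.sin_nonneg_of_nonneg_of_le_pi hψ.1 hψ.2
  have hmem : α / 2 ∈ Set.Icc (-(α / 2)) (α / 2) := ⟨by linarith, le_refl _⟩
  have hmem' : -(α / 2) ∈ Set.Icc (-(α / 2)) (α / 2) := ⟨le_refl _, by linarith⟩
  have hcos : ∀ γ ∈ Set.Icc (-(α / 2)) (α / 2),
      Real.cos (α / 2 + φ') ≤ Real.cos (γ - φ') ∧
      Real.cos (γ - φ') ≤ Real.cos (α / 2 - φ') := by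
    intro γ ⟨h1, h2⟩
    have e1 : Real.cos (γ - φ') = Real.cos (φ' - γ) := by
      rw [← Real.cos_neg]; ring_nf
    have e2 : Real.cos (α / 2 - φ') = Real.cos (φ' - α / 2) := by
      rw [← Real.cos_neg]; ring_nf
    have h3 : (0:ℝ) ≤ φ' - α / 2 := by linarith
    have h4 : φ' + α / 2 ≤ π := by linarith
    constructor
    · rw [e1, show α / 2 + φ' = φ' + α / 2 by ring]
      exact Real.cos_le_cos_of_nonneg_of_le_pi (by linarith) h4 (by linarith)
    · rw [e1, e2]
      exact Real.cos_le_cos_of_nonneg_of_le_pi h3 (by linarith [Real.pi_pos]; ) (by linarith)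
  have hGreatest : IsGreatest ((fun γ => Real.sin ψ * Real.cos (γ - φ')) ''
      Set.Icc (-(α / 2)) (α / 2)) (Real.sin ψ * Real.cos (α / 2 - φ')) := by
    constructor
    · exact ⟨α / 2, hmem, rfl⟩
    · rintro x ⟨γ, hγ, rfl⟩
      exact mul_le_mul_of_nonneg_left (hcos γ hγ).2 hs
  have hLeast : IsLeast ((fun γ => Real.sin ψ * Real.cos (γ - φ')) ''
      Set.Icc (-(α / 2)) (α / 2)) (Real.sin ψ * Real.cos (α / 2 + φ')) := by
    constructor
    · refine ⟨-(α / 2), hmem', ?_⟩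
      simp only
      rw [show -(α / 2) - φ' = -(α / 2 + φ') by ring, Real.cos_neg]
    · rintro x ⟨γ, hγ, rfl⟩
      exact mul_le_mul_of_nonneg_left (hcos γ hγ).1 hs
  have hFmax : Fmax α ψ φ' = Real.sin ψ * Real.cos (α / 2 - φ') :=
    hGreatest.csSup_eq
  have hFmin : Fmin α ψ φ' = Real.sin ψ * Real.cos (α / 2 + φ') :=
    hLeast.csInf_eq
  have hdiff : Real.cos (α / 2 - φ') - Real.cos (α / 2 + φ') =
      2 * Real.sin (α / 2) * Real.sin φ' := by
    rw [Real.cos_sub_cos]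
    ring_nf
    rw [Real.sin_neg]
    ring
  rw [omegaBW, hFmax, hFmin]
  rw [show Real.sin ψ * Real.cos (α / 2 - φ') - Real.sin ψ * Real.cos (α / 2 + φ')
    = Real.sin ψ * (Real.cos (α / 2 - φ') - Real.cos (α / 2 + φ')) by ring, hdiff]
  ring
end

section
/- Let k₀ > 0, α ∈ (0, π), ψ ∈ [0, π], and φ' ∈ [π − α/2, π]. Then ω(ψ, φ') = k₀ · sin ψ · (1 + cos(α/2 − φ')). -/
open Real Set

lemma cos_key (α φ' γ : ℝ) (hα : α ∈ Set.Ioo 0 π) (hφ : φ' ∈ Set.Icc (π - α / 2) π)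
    (hγ : γ ∈ Set.Icc (-(α / 2)) (α / 2)) :
    Real.cos (γ - φ') ≤ Real.cos (α / 2 - φ') := by
  have h1 : Real.cos (α / 2 - φ') = Real.cos (φ' - α / 2) := by
    rw [← Real.cos_neg (α / 2 - φ')]; ring_nf
  rw [h1]
  have hx1 : 0 ≤ φ' - α / 2 := by
    have := hφ.1; have := hα.2; linarith
  have hx2 : φ' - α / 2 ≤ π := by have := hφ.2; have := hα.1; linarith
  rcases le_or_gt (-π) (γ - φ') with h | h
  · have : Real.cos (γ - φ') = Real.cos (-(γ - φ')) := (Real.cos_neg _).symm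
    rw [this]
    apply Real.cos_le_cos_of_nonneg_of_le_pi hx1 (by linarith)
    have := hγ.2; have := hφ.1; linarith
  · have : Real.cos (γ - φ') = Real.cos ((γ - φ') + 2 * π) := (Real.cos_add_two_pi _).symm
    rw [this]
    apply Real.cos_le_cos_of_nonneg_of_le_pi hx1 (by linarith)
    have := hγ.1; have := hφ.2; linarith

/-- for k₀ > 0, α ∈ (0,π), ψ ∈ [0,π], φ' ∈ [π − α/2, π],
ω(ψ, φ') = k₀ · sin ψ · (1 + cos(α/2 − φ')). -/
theorem omegaBW_eq_seg3 (k₀ α ψ φ' : ℝ) (hk : 0 < k₀) (hα : α ∈ Set.Ioo 0 π)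
    (hψ : ψ ∈ Set.Icc 0 π) (hφ : φ' ∈ Set.Icc (π - α / 2) π) :
    omegaBW k₀ α ψ φ' = k₀ * Real.sin ψ * (1 + Real.cos (α / 2 - φ')) := by
  have hs : 0 ≤ Real.sin ψ := Real.sin_nonneg_of_nonneg_of_le_pi hψ.1 hψ.2
  have hmax : Fmax α ψ φ' = Real.sin ψ * Real.cos (α / 2 - φ') := by
    apply IsGreatest.csSup_eq
    constructor
    · exact ⟨α / 2, ⟨by have := hα.1; linarith, le_refl _⟩, rfl⟩
    · rintro x ⟨γ, hγ, rfl⟩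
      exact mul_le_mul_of_nonneg_left (cos_key α φ' γ hα hφ hγ) hs
  have hmin : Fmin α ψ φ' = -Real.sin ψ := by
    apply IsLeast.csInf_eq
    constructor
    · refine ⟨φ' - π, ⟨by have := hφ.1; linarith, by have := hφ.2; have := hα.1; linarith⟩, ?_⟩
      show Real.sin ψ * Real.cos (φ' - π - φ') = -Real.sin ψ
      have : φ' - π - φ' = -π := by ring
      rw [this, Real.cos_neg, Real.cos_pi]; ring
    · rintro x ⟨γ, hγ, rfl⟩
      show -Real.sin ψ ≤ Real.sin ψ * Real.cos (γ - φ')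
      have := Real.neg_one_le_cos (γ - φ')
      nlinarith
  rw [omegaBW, hmax, hmin]; ring
end

section
/- Let k₀ > 0 and α ∈ (0, π). The supremum of ω(ψ, φ') over all ψ ∈ [0, π] and φ' ∈ [0, π] equals 2 k₀ · sin(α/2), and this value is attained at (ψ, φ') = (π/2, π/2). -/
open Real Set

private lemma abs_sin_le_aux {α t : ℝ} (hα : α ∈ Set.Ioo 0 π) (ht : |t| ≤ α / 2) :
    |Real.sin t| ≤ Real.sin (α / 2) := by
  obtain ⟨h1, h2⟩ := abs_le.1 ht
  have hpi := Real.pi_pos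
  have hmt : t ∈ Set.Icc (-(π/2)) (π/2) := ⟨by linarith [hα.2], by linarith [hα.2]⟩
  have hma : α/2 ∈ Set.Icc (-(π/2)) (π/2) := ⟨by linarith [hα.1], by linarith [hα.2]⟩
  have hma' : -(α/2) ∈ Set.Icc (-(π/2)) (π/2) := ⟨by linarith [hα.2], by linarith [hα.1]⟩
  have hub : Real.sin t ≤ Real.sin (α/2) :=
    Real.strictMonoOn_sin.monotoneOn hmt hma h2
  have hlb : Real.sin (-(α/2)) ≤ Real.sin t :=
    Real.strictMonoOn_sin.monotoneOn hma' hmt h1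
  rw [Real.sin_neg] at hlb
  exact abs_le.2 ⟨by linarith, hub⟩

private lemma cos_diff_le {α x y : ℝ} (hα : α ∈ Set.Ioo 0 π) (h : |x - y| ≤ α) :
    Real.cos x - Real.cos y ≤ 2 * Real.sin (α / 2) := by
  rw [Real.cos_sub_cos]
  have h1 : |Real.sin ((x + y) / 2)| ≤ 1 := Real.abs_sin_le_one _
  have h2 : |Real.sin ((x - y) / 2)| ≤ Real.sin (α / 2) := by
    apply abs_sin_le_aux hα
    rw [abs_div, abs_two]
    linarith
  calc -2 * Real.sin ((x + y) / 2) * Real.sin ((x - y) / 2)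
      ≤ |(-2) * Real.sin ((x + y) / 2) * Real.sin ((x - y) / 2)| := le_abs_self _
    _ = 2 * (|Real.sin ((x + y) / 2)| * |Real.sin ((x - y) / 2)|) := by
        rw [abs_mul, abs_mul, abs_neg, abs_two]; ring
    _ ≤ 2 * (1 * Real.sin (α / 2)) := by
        apply mul_le_mul_of_nonneg_left _ (by norm_num)
        exact mul_le_mul h1 h2 (abs_nonneg _) zero_le_one
    _ = 2 * Real.sin (α / 2) := by ring

/-- Proposition 1: the supremum of ω(ψ, φ') over ψ ∈ [0,π],
φ' ∈ [0,π] equals 2 k₀ sin(α/2), and this value is attained at (π/2, π/2). -/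
theorem omegaBW_sup (k₀ α : ℝ) (hk : 0 < k₀) (hα : α ∈ Set.Ioo 0 π) :
    sSup {x : ℝ | ∃ ψ ∈ Set.Icc (0 : ℝ) π, ∃ φ' ∈ Set.Icc (0 : ℝ) π,
        x = omegaBW k₀ α ψ φ'} = 2 * k₀ * Real.sin (α / 2) ∧
      omegaBW k₀ α (π / 2) (π / 2) = 2 * k₀ * Real.sin (α / 2) := by
  have hpi := Real.pi_pos
  have hαpos := hα.1
  have hαlt := hα.2
  have hIcc : Set.Nonempty (Set.Icc (-(α/2)) (α/2)) :=
    Set.nonempty_Icc.2 (by linarith)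
  have hs_nonneg : 0 ≤ Real.sin (α/2) :=
    Real.sin_nonneg_of_nonneg_of_le_pi (by linarith) (by linarith)
  -- key bound: for ψ ∈ [0,π], Fmax - Fmin ≤ 2 sin(α/2)
  have key : ∀ ψ ∈ Set.Icc (0:ℝ) π, ∀ φ' : ℝ,
      Fmax α ψ φ' - Fmin α ψ φ' ≤ 2 * Real.sin (α/2) := by
    intro ψ hψ φ'
    set f : ℝ → ℝ := fun γ => Real.sin ψ * Real.cos (γ - φ') with hf
    have hcont : ContinuousOn f (Set.Icc (-(α/2)) (α/2)) := by fun_prop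
    have hcomp : IsCompact (f '' Set.Icc (-(α/2)) (α/2)) :=
      isCompact_Icc.image_of_continuousOn hcont
    have hne : (f '' Set.Icc (-(α/2)) (α/2)).Nonempty := hIcc.image f
    obtain ⟨a, ha, hfa⟩ := hcomp.sSup_mem hne
    obtain ⟨b, hb, hfb⟩ := hcomp.sInf_mem hne
    have hsin0 : 0 ≤ Real.sin ψ :=
      Real.sin_nonneg_of_nonneg_of_le_pi hψ.1 hψ.2
    have hsin1 : Real.sin ψ ≤ 1 := Real.sin_le_one ψ
    have habd : |(a - φ') - (b - φ')| ≤ α := by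
      rw [abs_le]
      constructor <;>
        [linarith [ha.1, ha.2, hb.1, hb.2]; linarith [ha.1, ha.2, hb.1, hb.2]]
    have hcd : Real.cos (a - φ') - Real.cos (b - φ') ≤ 2 * Real.sin (α/2) :=
      cos_diff_le hα habd
    have heq : Fmax α ψ φ' - Fmin α ψ φ'
        = Real.sin ψ * (Real.cos (a - φ') - Real.cos (b - φ')) := by
      show sSup (f '' Set.Icc (-(α/2)) (α/2)) - sInf (f '' Set.Icc (-(α/2)) (α/2)) = _
      rw [← hfa, ← hfb]
      simp only [hf]
      ring
    rw [heq]
    rcases le_or_gt (Real.cos (a - φ') - Real.cos (b - φ')) 0 with hd | hd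
    · have := mul_nonpos_of_nonneg_of_nonpos hsin0 hd
      linarith
    · calc Real.sin ψ * (Real.cos (a - φ') - Real.cos (b - φ'))
          ≤ 1 * (Real.cos (a - φ') - Real.cos (b - φ')) :=
            mul_le_mul_of_nonneg_right hsin1 hd.le
        _ ≤ 2 * Real.sin (α/2) := by linarith
  -- value at (π/2, π/2)
  have hval : omegaBW k₀ α (π / 2) (π / 2) = 2 * k₀ * Real.sin (α / 2) := by
    have hfun : ∀ γ : ℝ, Real.sin (π/2) * Real.cos (γ - π/2) = Real.sin γ := by
      intro γ
      rw [Real.sin_pi_div_two, one_mul, show γ - π/2 = -(π/2 - γ) by ring,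
        Real.cos_neg, Real.cos_pi_div_two_sub]
    have himg : (fun γ => Real.sin (π/2) * Real.cos (γ - π/2)) '' Set.Icc (-(α/2)) (α/2)
        = Real.sin '' Set.Icc (-(α/2)) (α/2) := by
      apply Set.image_congr
      intro γ _; exact hfun γ
    have hsub : Set.Icc (-(α/2)) (α/2) ⊆ Set.Icc (-(π/2)) (π/2) := by
      apply Set.Icc_subset_Icc <;> linarith
    have hmono : MonotoneOn Real.sin (Set.Icc (-(α/2)) (α/2)) :=
      (Real.strictMonoOn_sin.monotoneOn).mono hsub
    have hcont : ContinuousOn Real.sin (Set.Icc (-(α/2)) (α/2)) :=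
      Real.continuous_sin.continuousOn
    have hbdd : BddAbove (Real.sin '' Set.Icc (-(α/2)) (α/2)) ∧
        BddBelow (Real.sin '' Set.Icc (-(α/2)) (α/2)) := by
      have hc : IsCompact (Real.sin '' Set.Icc (-(α/2)) (α/2)) :=
        isCompact_Icc.image_of_continuousOn hcont
      exact ⟨hc.bddAbove, hc.bddBelow⟩
    have hne2 : (Real.sin '' Set.Icc (-(α/2)) (α/2)).Nonempty := hIcc.image _
    have hmemtop : Real.sin (α/2) ∈ Real.sin '' Set.Icc (-(α/2)) (α/2) :=
      ⟨α/2, ⟨by linarith, le_refl _⟩, rfl⟩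
    have hmembot : Real.sin (-(α/2)) ∈ Real.sin '' Set.Icc (-(α/2)) (α/2) :=
      ⟨-(α/2), ⟨le_refl _, by linarith⟩, rfl⟩
    have hFmax : Fmax α (π/2) (π/2) = Real.sin (α/2) := by
      rw [Fmax, himg]
      apply le_antisymm
      · apply csSup_le hne2
        rintro x ⟨γ, hγ, rfl⟩
        exact hmono hγ ⟨by linarith, le_refl _⟩ hγ.2
      · exact le_csSup hbdd.1 hmemtop
    have hFmin : Fmin α (π/2) (π/2) = -Real.sin (α/2) := by
      rw [Fmin, himg]
      apply le_antisymm
      · calc sInf (Real.sin '' Set.Icc (-(α/2)) (α/2)) ≤ Real.sin (-(α/2)) :=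
              csInf_le hbdd.2 hmembot
          _ = -Real.sin (α/2) := Real.sin_neg _
      · apply le_csInf hne2
        rintro x ⟨γ, hγ, rfl⟩
        have := hmono ⟨le_refl _, by linarith⟩ hγ hγ.1
        rw [Real.sin_neg] at this
        linarith
    rw [omegaBW, hFmax, hFmin]
    ring
  refine ⟨?_, hval⟩
  apply le_antisymm
  · apply csSup_le
    · exact ⟨2 * k₀ * Real.sin (α/2), π/2,
        ⟨by linarith, by linarith⟩, π/2, ⟨by linarith, by linarith⟩, hval.symm⟩
    · rintro x ⟨ψ, hψ, φ', hφ', rfl⟩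
      rw [omegaBW]
      calc k₀ * (Fmax α ψ φ' - Fmin α ψ φ')
          ≤ k₀ * (2 * Real.sin (α/2)) :=
            mul_le_mul_of_nonneg_left (key ψ hψ φ') hk.le
        _ = 2 * k₀ * Real.sin (α/2) := by ring
  · apply le_csSup
    · refine ⟨2 * k₀ * Real.sin (α/2), ?_⟩
      rintro x ⟨ψ, hψ, φ', hφ', rfl⟩
      rw [omegaBW]
      calc k₀ * (Fmax α ψ φ' - Fmin α ψ φ')
          ≤ k₀ * (2 * Real.sin (α/2)) :=
            mul_le_mul_of_nonneg_left (key ψ hψ φ') hk.le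
        _ = 2 * k₀ * Real.sin (α/2) := by ring
    · exact ⟨π/2, ⟨by linarith, by linarith⟩, π/2, ⟨by linarith, by linarith⟩, hval.symm⟩
end

section
/- Let k₀ > 0 and α ∈ (0, π). For ψ ∈ [0, π] and φ' ∈ [0, π], the equality ω(ψ, φ') = 2 k₀ · sin(α/2) holds if and only if ψ = π/2 and φ' = π/2. -/
open Real Set

lemma aux_cont (ψ φ' : ℝ) : Continuous (fun γ => Real.sin ψ * Real.cos (γ - φ')) := by
  fun_prop

lemma Fmax_attained (α ψ φ' : ℝ) (hα : 0 < α) :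
    ∃ x ∈ Icc (-(α/2)) (α/2), Fmax α ψ φ' = Real.sin ψ * Real.cos (x - φ') := by
  obtain ⟨x, hx, hmax⟩ := (isCompact_Icc (a := -(α/2)) (b := α/2)).exists_isMaxOn
    ⟨0, by constructor <;> linarith⟩ (aux_cont ψ φ').continuousOn
  refine ⟨x, hx, IsGreatest.csSup_eq ⟨mem_image_of_mem _ hx, ?_⟩⟩
  rintro _ ⟨y, hy, rfl⟩
  exact hmax hy

lemma Fmin_attained (α ψ φ' : ℝ) (hα : 0 < α) :
    ∃ x ∈ Icc (-(α/2)) (α/2), Fmin α ψ φ' = Real.sin ψ * Real.cos (x - φ') := by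
  obtain ⟨x, hx, hmin⟩ := (isCompact_Icc (a := -(α/2)) (b := α/2)).exists_isMinOn
    ⟨0, by constructor <;> linarith⟩ (aux_cont ψ φ').continuousOn
  refine ⟨x, hx, IsLeast.csInf_eq ⟨mem_image_of_mem _ hx, ?_⟩⟩
  rintro _ ⟨y, hy, rfl⟩
  exact hmin hy

lemma Fmax_special (α : ℝ) (hα : α ∈ Ioo 0 π) :
    Fmax α (π/2) (π/2) = Real.sin (α/2) := by
  obtain ⟨h0, hπ⟩ := hα
  apply IsGreatest.csSup_eq
  constructor
  · exact ⟨α/2, ⟨by linarith, le_refl _⟩, by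
      simp [Real.sin_pi_div_two, Real.cos_sub_pi_div_two]⟩
  · rintro _ ⟨γ, hγ, rfl⟩
    simp only [Real.sin_pi_div_two, one_mul, Real.cos_sub_pi_div_two]
    exact Real.strictMonoOn_sin.monotoneOn
      ⟨by linarith [hγ.1], by linarith [hγ.2]⟩ ⟨by linarith, by linarith⟩ hγ.2

lemma Fmin_special (α : ℝ) (hα : α ∈ Ioo 0 π) :
    Fmin α (π/2) (π/2) = -Real.sin (α/2) := by
  obtain ⟨h0, hπ⟩ := hα
  apply IsLeast.csInf_eq
  constructor
  · exact ⟨-(α/2), ⟨le_refl _, by linarith⟩, by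
      simp [Real.sin_pi_div_two, Real.cos_sub_pi_div_two]⟩
  · rintro _ ⟨γ, hγ, rfl⟩
    simp only [Real.sin_pi_div_two, one_mul, Real.cos_sub_pi_div_two]
    have := Real.strictMonoOn_sin.monotoneOn
      (a := -(α/2)) (b := γ) ⟨by linarith, by linarith⟩
      ⟨by linarith [hγ.1], by linarith [hγ.2]⟩ hγ.1
    simpa [Real.sin_neg] using this

lemma key_prod {a b c S : ℝ} (hS : 0 < S) (ha0 : 0 ≤ a) (ha1 : a ≤ 1)
    (hb0 : -1 ≤ b) (hb1 : b ≤ 1) (hc0 : -S ≤ c) (hc1 : c ≤ S)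
    (h : a * b * c = S) : a = 1 ∧ ((b = 1 ∧ c = S) ∨ (b = -1 ∧ c = -S)) := by
  have hbc : b * c ≤ S := by nlinarith
  have hbc' : -S ≤ b * c := by nlinarith
  have ha : a = 1 := by nlinarith
  subst ha
  have hbcS : b * c = S := by linarith [h, (by ring : (1:ℝ) * b * c = b * c)]
  refine ⟨rfl, ?_⟩
  rcases le_or_gt 0 c with hc | hc
  · left
    have hcS : c = S := by nlinarith
    have hb : b = 1 := by
      have h2 : b * S = 1 * S := by rw [← hcS]; linarith [hbcS]
      exact mul_right_cancel₀ (ne_of_gt hS) h2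
    exact ⟨hb, hcS⟩
  · right
    have hcS : c = -S := by nlinarith
    have hb : b = -1 := by
      have h2 : b * S = (-1) * S := by nlinarith [hbcS, hcS]
      exact mul_right_cancel₀ (ne_of_gt hS) h2
    exact ⟨hb, hcS⟩

/-- uniqueness in Proposition 1: for ψ ∈ [0,π], φ' ∈ [0,π],
ω(ψ, φ') = 2 k₀ sin(α/2) iff ψ = π/2 and φ' = π/2. -/
theorem omegaBW_eq_max_iff (k₀ α : ℝ) (hk : 0 < k₀) (hα : α ∈ Set.Ioo 0 π)
    (ψ φ' : ℝ) (hψ : ψ ∈ Set.Icc 0 π) (hφ : φ' ∈ Set.Icc 0 π) :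
    omegaBW k₀ α ψ φ' = 2 * k₀ * Real.sin (α / 2) ↔ ψ = π / 2 ∧ φ' = π / 2 := by
  obtain ⟨hα0, hαπ⟩ := hα
  have hS : 0 < Real.sin (α/2) := Real.sin_pos_of_pos_of_lt_pi (by linarith) (by linarith)
  constructor
  · intro h
    obtain ⟨x, hx, hxe⟩ := Fmax_attained α ψ φ' hα0
    obtain ⟨y, hy, hye⟩ := Fmin_attained α ψ φ' hα0
    have heq : Real.sin ψ * Real.cos (x - φ') - Real.sin ψ * Real.cos (y - φ')
        = 2 * Real.sin (α/2) := by
      have h' : k₀ * (Real.sin ψ * Real.cos (x - φ') - Real.sin ψ * Real.cos (y - φ'))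
          = k₀ * (2 * Real.sin (α/2)) := by
        rw [← hxe, ← hye]
        unfold omegaBW at h
        linarith [h]
      exact mul_left_cancel₀ (ne_of_gt hk) h'
    have hcc : Real.cos (x - φ') - Real.cos (y - φ')
        = -2 * Real.sin ((x + y)/2 - φ') * Real.sin ((x - y)/2) := by
      have := Real.cos_sub_cos (x - φ') (y - φ')
      have e1 : ((x - φ') + (y - φ'))/2 = (x + y)/2 - φ' := by ring
      have e2 : ((x - φ') - (y - φ'))/2 = (x - y)/2 := by ring
      rw [e1, e2] at this
      exact this
    set a := Real.sin ψ with ha_def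
    set b := -Real.sin ((x + y)/2 - φ') with hb_def
    set c := Real.sin ((x - y)/2) with hc_def
    have habc : a * b * c = Real.sin (α/2) := by
      have : a * (Real.cos (x - φ') - Real.cos (y - φ')) = 2 * Real.sin (α/2) := by
        linarith [heq]
      rw [hcc] at this
      nlinarith [this]
    have ha0 : 0 ≤ a := Real.sin_nonneg_of_nonneg_of_le_pi hψ.1 hψ.2
    have ha1 : a ≤ 1 := Real.sin_le_one ψ
    have hb0 : -1 ≤ b := by
      rw [hb_def]; linarith [Real.sin_le_one ((x + y)/2 - φ')]
    have hb1 : b ≤ 1 := by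
      rw [hb_def]; linarith [Real.neg_one_le_sin ((x + y)/2 - φ')]
    have ht : (x - y)/2 ∈ Icc (-(α/2)) (α/2) :=
      ⟨by linarith [hx.1, hy.2], by linarith [hx.2, hy.1]⟩
    have htmem : (x - y)/2 ∈ Icc (-(π/2)) (π/2) :=
      ⟨by linarith [ht.1], by linarith [ht.2]⟩
    have hαmem : α/2 ∈ Icc (-(π/2)) (π/2) := ⟨by linarith, by linarith⟩
    have hnαmem : -(α/2) ∈ Icc (-(π/2)) (π/2) := ⟨by linarith, by linarith⟩
    have hc1 : c ≤ Real.sin (α/2) :=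
      Real.strictMonoOn_sin.monotoneOn htmem hαmem ht.2
    have hc0 : -Real.sin (α/2) ≤ c := by
      have := Real.strictMonoOn_sin.monotoneOn hnαmem htmem ht.1
      simpa [Real.sin_neg] using this
    obtain ⟨haone, hbc⟩ := key_prod hS ha0 ha1 hb0 hb1 hc0 hc1 habc
    -- ψ = π/2 from sin ψ = 1
    have hψ2 : ψ = π/2 := by
      have hcos : Real.cos ψ = 0 := by
        have := Real.sin_sq_add_cos_sq ψ
        nlinarith [haone]
      have : Real.cos ψ = Real.cos (π/2) := by rw [Real.cos_pi_div_two]; exact hcos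
      exact Real.injOn_cos ⟨hψ.1, hψ.2⟩ ⟨by positivity, by linarith [Real.pi_pos]⟩ this
    refine ⟨hψ2, ?_⟩
    have hsinφ : Real.sin φ' = 1 := by
      rcases hbc with ⟨hb, hc⟩ | ⟨hb, hc⟩
      · -- c = S : (x-y)/2 = α/2, so x = α/2, y = -(α/2)
        have hxy : (x - y)/2 = α/2 := by
          apply Real.injOn_sin htmem hαmem
          rw [← hc_def, hc]
        have hxv : x = α/2 := by linarith [hx.2, hy.1]
        have hyv : y = -(α/2) := by linarith [hx.2, hy.1]
        have hsum : (x + y)/2 = 0 := by rw [hxv, hyv]; ring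
        have : b = Real.sin φ' := by
          rw [hb_def, hsum]
          simp [Real.sin_neg]
        rw [← this, hb]
      · -- c = -S : x = -(α/2), y = α/2, sum = 0, b = sin φ' = -1, contradiction
        have hxy : (x - y)/2 = -(α/2) := by
          apply Real.injOn_sin htmem hnαmem
          rw [← hc_def, hc, Real.sin_neg]
        have hxv : x = -(α/2) := by linarith [hx.1, hy.2]
        have hyv : y = α/2 := by linarith [hx.1, hy.2]
        have hsum : (x + y)/2 = 0 := by rw [hxv, hyv]; ring
        have hbs : b = Real.sin φ' := by
          rw [hb_def, hsum]
          simp [Real.sin_neg]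
        have : Real.sin φ' = -1 := by rw [← hbs]; exact hb
        have := Real.sin_nonneg_of_nonneg_of_le_pi hφ.1 hφ.2
        linarith
    have hcosφ : Real.cos φ' = 0 := by
      have := Real.sin_sq_add_cos_sq φ'
      nlinarith [hsinφ]
    have : Real.cos φ' = Real.cos (π/2) := by rw [Real.cos_pi_div_two]; exact hcosφ
    exact Real.injOn_cos ⟨hφ.1, hφ.2⟩ ⟨by positivity, by linarith [Real.pi_pos]⟩ this
  · rintro ⟨rfl, rfl⟩
    unfold omegaBW
    rw [Fmax_special α ⟨hα0, hαπ⟩, Fmin_special α ⟨hα0, hαπ⟩]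
    ring
end

section
/- Let k₀ > 0, α ∈ (0, π), ψ ∈ [0, π], and φ' ∈ [0, α/2]. Then ω(ψ, φ') ≤ k₀ · (1 − cos α), with equality when (ψ, φ') = (π/2, α/2). -/
open Real Set

lemma Fmax_eq (α ψ φ' : ℝ) (hα : α ∈ Set.Ioo 0 π)
    (hψ : ψ ∈ Set.Icc 0 π) (hφ : φ' ∈ Set.Icc 0 (α / 2)) :
    Fmax α ψ φ' = Real.sin ψ := by
  have hs : 0 ≤ Real.sin ψ := Real.sin_nonneg_of_nonneg_of_le_pi hψ.1 hψ.2
  have hG : IsGreatest ((fun γ => Real.sin ψ * Real.cos (γ - φ')) ''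
      Set.Icc (-(α / 2)) (α / 2)) (Real.sin ψ) := by
    constructor
    · refine ⟨φ', ⟨by linarith [hφ.1, hα.1], hφ.2⟩, by simp⟩
    · rintro x ⟨γ, hγ, rfl⟩
      calc Real.sin ψ * Real.cos (γ - φ') ≤ Real.sin ψ * 1 :=
            mul_le_mul_of_nonneg_left (Real.cos_le_one _) hs
        _ = Real.sin ψ := mul_one _
  exact hG.csSup_eq

lemma Fmin_eq (α ψ φ' : ℝ) (hα : α ∈ Set.Ioo 0 π)
    (hψ : ψ ∈ Set.Icc 0 π) (hφ : φ' ∈ Set.Icc 0 (α / 2)) :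
    Fmin α ψ φ' = Real.sin ψ * Real.cos (α / 2 + φ') := by
  have hs : 0 ≤ Real.sin ψ := Real.sin_nonneg_of_nonneg_of_le_pi hψ.1 hψ.2
  have hL : IsLeast ((fun γ => Real.sin ψ * Real.cos (γ - φ')) ''
      Set.Icc (-(α / 2)) (α / 2)) (Real.sin ψ * Real.cos (α / 2 + φ')) := by
    constructor
    · refine ⟨-(α / 2), ⟨le_refl _, by linarith [hα.1]⟩, ?_⟩
      show Real.sin ψ * Real.cos (-(α / 2) - φ') = _
      rw [show -(α / 2) - φ' = -(α / 2 + φ') by ring, Real.cos_neg]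
    · rintro x ⟨γ, hγ, rfl⟩
      have habs : |γ - φ'| ≤ α / 2 + φ' := by
        rw [abs_le]; constructor <;> [linarith [hγ.1]; linarith [hγ.2, hφ.1]]
      have h1 : Real.cos (α / 2 + φ') ≤ Real.cos |γ - φ'| := by
        apply Real.cos_le_cos_of_nonneg_of_le_pi (abs_nonneg _) _ habs
        linarith [hφ.2, hα.2]
      rw [Real.cos_abs] at h1
      exact mul_le_mul_of_nonneg_left h1 hs

  exact hL.csInf_eq


/-- for φ' ∈ [0, α/2], ω(ψ, φ') ≤ k₀ (1 − cos α), with equality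
when (ψ, φ') = (π/2, α/2). -/
theorem omegaBW_le_seg1 (k₀ α : ℝ) (hk : 0 < k₀) (hα : α ∈ Set.Ioo 0 π)
    (ψ φ' : ℝ) (hψ : ψ ∈ Set.Icc 0 π) (hφ : φ' ∈ Set.Icc 0 (α / 2)) :
    omegaBW k₀ α ψ φ' ≤ k₀ * (1 - Real.cos α) ∧
      omegaBW k₀ α (π / 2) (α / 2) = k₀ * (1 - Real.cos α) := by
  constructor
  · rw [omegaBW, Fmax_eq α ψ φ' hα hψ hφ, Fmin_eq α ψ φ' hα hψ hφ]
    have hs : 0 ≤ Real.sin ψ := Real.sin_nonneg_of_nonneg_of_le_pi hψ.1 hψ.2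
    have hs1 : Real.sin ψ ≤ 1 := Real.sin_le_one ψ
    have hc : Real.cos α ≤ Real.cos (α / 2 + φ') := by
      apply Real.cos_le_cos_of_nonneg_of_le_pi (by linarith [hφ.1, hα.1]) hα.2.le
      linarith [hφ.2]
    have hc1 : Real.cos (α / 2 + φ') ≤ 1 := Real.cos_le_one _
    have key : Real.sin ψ - Real.sin ψ * Real.cos (α / 2 + φ') ≤ 1 - Real.cos α := by
      have : Real.sin ψ * (1 - Real.cos (α / 2 + φ')) ≤ 1 * (1 - Real.cos (α / 2 + φ')) :=
        mul_le_mul_of_nonneg_right hs1 (by linarith)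
      nlinarith
    exact mul_le_mul_of_nonneg_left key hk.le
  · have hψ' : (π / 2 : ℝ) ∈ Set.Icc 0 π := ⟨by positivity, by linarith [Real.pi_pos]⟩
    have hφ' : (α / 2 : ℝ) ∈ Set.Icc 0 (α / 2) := ⟨by linarith [hα.1], le_refl _⟩
    rw [omegaBW, Fmax_eq α _ _ hα hψ' hφ', Fmin_eq α _ _ hα hψ' hφ']
    rw [Real.sin_pi_div_two]
    ring_nf
end

section
/- Let k₀ > 0, α ∈ (0, π), ψ ∈ [0, π], and φ' ∈ [α/2, π − α/2]. Then ω(ψ, φ') ≤ 2 k₀ · sin(α/2), with equality when (ψ, φ') = (π/2, π/2). -/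
open Real Set

lemma Fmax_eq_aux (α ψ φ' : ℝ) (hα : 0 < α) (hs : 0 ≤ Real.sin ψ)
    (h1 : α / 2 ≤ φ') (h2 : φ' ≤ π - α / 2) :
    Fmax α ψ φ' = Real.sin ψ * Real.cos (α / 2 - φ') := by
  apply IsGreatest.csSup_eq
  constructor
  · exact ⟨α / 2, ⟨by linarith, le_refl _⟩, rfl⟩
  · rintro x ⟨γ, ⟨hg1, hg2⟩, rfl⟩
    apply mul_le_mul_of_nonneg_left _ hs
    rw [← Real.cos_neg (γ - φ'), ← Real.cos_neg (α / 2 - φ')]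
    ring_nf
    exact Real.cos_le_cos_of_nonneg_of_le_pi (by linarith) (by linarith) (by linarith)

lemma Fmin_eq_aux (α ψ φ' : ℝ) (hα : 0 < α) (hs : 0 ≤ Real.sin ψ)
    (h1 : α / 2 ≤ φ') (h2 : φ' ≤ π - α / 2) :
    Fmin α ψ φ' = Real.sin ψ * Real.cos (α / 2 + φ') := by
  apply IsLeast.csInf_eq
  constructor
  · refine ⟨-(α / 2), ⟨le_refl _, by linarith⟩, ?_⟩
    show Real.sin ψ * Real.cos (-(α / 2) - φ') = _
    rw [show -(α / 2) - φ' = -(α / 2 + φ') by ring, Real.cos_neg]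
  · rintro x ⟨γ, ⟨hg1, hg2⟩, rfl⟩
    apply mul_le_mul_of_nonneg_left _ hs
    rw [← Real.cos_neg (γ - φ')]
    ring_nf
    exact Real.cos_le_cos_of_nonneg_of_le_pi (by linarith) (by linarith) (by linarith)

lemma omegaBW_eq_aux (k₀ α ψ φ' : ℝ) (hα : 0 < α) (hs : 0 ≤ Real.sin ψ)
    (h1 : α / 2 ≤ φ') (h2 : φ' ≤ π - α / 2) :
    omegaBW k₀ α ψ φ' = k₀ * (Real.sin ψ * (2 * Real.sin φ' * Real.sin (α / 2))) := by
  rw [omegaBW, Fmax_eq_aux α ψ φ' hα hs h1 h2, Fmin_eq_aux α ψ φ' hα hs h1 h2,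
    ← mul_sub, Real.cos_sub_cos]
  rw [show (α / 2 - φ' + (α / 2 + φ')) / 2 = α / 2 by ring,
    show (α / 2 - φ' - (α / 2 + φ')) / 2 = -φ' by ring, Real.sin_neg]
  ring

/-- for φ' ∈ [α/2, π − α/2], ω(ψ, φ') ≤ 2 k₀ sin(α/2), with
equality when (ψ, φ') = (π/2, π/2). -/
theorem omegaBW_le_seg2 (k₀ α : ℝ) (hk : 0 < k₀) (hα : α ∈ Set.Ioo 0 π)
    (ψ φ' : ℝ) (hψ : ψ ∈ Set.Icc 0 π) (hφ : φ' ∈ Set.Icc (α / 2) (π - α / 2)) :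
    omegaBW k₀ α ψ φ' ≤ 2 * k₀ * Real.sin (α / 2) ∧
      omegaBW k₀ α (π / 2) (π / 2) = 2 * k₀ * Real.sin (α / 2) := by
  obtain ⟨hα0, hαπ⟩ := hα
  obtain ⟨hψ0, hψπ⟩ := hψ
  obtain ⟨hφ1, hφ2⟩ := hφ
  have hsψ : 0 ≤ Real.sin ψ := Real.sin_nonneg_of_nonneg_of_le_pi hψ0 hψπ
  have hsψ1 : Real.sin ψ ≤ 1 := Real.sin_le_one ψ
  have hsφ : 0 ≤ Real.sin φ' :=
    Real.sin_nonneg_of_nonneg_of_le_pi (by linarith) (by linarith)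
  have hsφ1 : Real.sin φ' ≤ 1 := Real.sin_le_one φ'
  have hsα : 0 ≤ Real.sin (α / 2) :=
    Real.sin_nonneg_of_nonneg_of_le_pi (by linarith) (by linarith)
  constructor
  · rw [omegaBW_eq_aux k₀ α ψ φ' hα0 hsψ hφ1 hφ2]
    nlinarith [mul_le_one₀ hsψ1 hsφ hsφ1, mul_nonneg hk.le hsα, mul_nonneg hsψ hsφ]
  · rw [omegaBW_eq_aux k₀ α (π / 2) (π / 2) hα0 (by rw [Real.sin_pi_div_two]; norm_num)
      (by linarith) (by linarith), Real.sin_pi_div_two]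
    ring
end

section
/- Let k₀ > 0, α ∈ (0, π), ψ ∈ [0, π], and φ' ∈ [π − α/2, π]. Then ω(ψ, φ') ≤ k₀ · (1 − cos α), with equality when (ψ, φ') = (π/2, π − α/2). -/
open Real Set

lemma fmax_eq3 (α ψ φ' : ℝ) (hα : α ∈ Set.Ioo 0 π) (hψ : ψ ∈ Set.Icc 0 π)
    (hφ : φ' ∈ Set.Icc (π - α / 2) π) :
    Fmax α ψ φ' = Real.sin ψ * Real.cos (α / 2 - φ') := by
  have hs : 0 ≤ Real.sin ψ := Real.sin_nonneg_of_nonneg_of_le_pi hψ.1 hψ.2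
  have hα1 := hα.1; have hα2 := hα.2
  have hφ1 := hφ.1; have hφ2 := hφ.2
  apply IsGreatest.csSup_eq
  constructor
  · exact ⟨α / 2, ⟨by linarith, le_refl _⟩, rfl⟩
  · rintro x ⟨γ, hγ, rfl⟩
    apply mul_le_mul_of_nonneg_left _ hs
    set t := γ - φ' with ht
    have h1 : t ≤ α / 2 - φ' := by simp only [ht]; linarith [hγ.2]
    have h2 : -(α / 2) - φ' ≤ t := by simp only [ht]; linarith [hγ.1]
    by_cases hc : -π ≤ t
    · -- cos t ≤ cos (α/2 - φ') via increasing on [-π, 0]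
      have := Real.cos_le_cos_of_nonneg_of_le_pi (x := -(α / 2 - φ')) (y := -t)
        (by linarith) (by linarith) (by linarith)
      rwa [Real.cos_neg, Real.cos_neg] at this
    · push_neg at hc
      have : Real.cos t = Real.cos (t + 2 * π) := (Real.cos_add_two_pi t).symm
      rw [this]
      have h3 : Real.cos (t + 2 * π) ≤ Real.cos (φ' - α / 2) :=
        Real.cos_le_cos_of_nonneg_of_le_pi (x := φ' - α / 2) (y := t + 2 * π)
          (by linarith) (by linarith) (by linarith)
      have h4 : Real.cos (φ' - α / 2) = Real.cos (α / 2 - φ') := by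
        rw [← Real.cos_neg (φ' - α / 2)]; ring_nf
      linarith

lemma fmin_eq3 (α ψ φ' : ℝ) (hα : α ∈ Set.Ioo 0 π) (hψ : ψ ∈ Set.Icc 0 π)
    (hφ : φ' ∈ Set.Icc (π - α / 2) π) :
    Fmin α ψ φ' = -Real.sin ψ := by
  have hs : 0 ≤ Real.sin ψ := Real.sin_nonneg_of_nonneg_of_le_pi hψ.1 hψ.2
  have hα1 := hα.1; have hα2 := hα.2
  have hφ1 := hφ.1; have hφ2 := hφ.2
  apply IsLeast.csInf_eq
  constructor
  · refine ⟨φ' - π, ⟨by linarith, by linarith⟩, ?_⟩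
    show Real.sin ψ * Real.cos (φ' - π - φ') = -Real.sin ψ
    have : φ' - π - φ' = -π := by ring
    rw [this, Real.cos_neg, Real.cos_pi]
    ring
  · rintro x ⟨γ, hγ, rfl⟩
    show -Real.sin ψ ≤ Real.sin ψ * Real.cos (γ - φ')
    have := Real.neg_one_le_cos (γ - φ')
    nlinarith

/-- for φ' ∈ [π − α/2, π], ω(ψ, φ') ≤ k₀ (1 − cos α), with
equality when (ψ, φ') = (π/2, π − α/2). -/
theorem omegaBW_le_seg3 (k₀ α : ℝ) (hk : 0 < k₀) (hα : α ∈ Set.Ioo 0 π)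
    (ψ φ' : ℝ) (hψ : ψ ∈ Set.Icc 0 π) (hφ : φ' ∈ Set.Icc (π - α / 2) π) :
    omegaBW k₀ α ψ φ' ≤ k₀ * (1 - Real.cos α) ∧
      omegaBW k₀ α (π / 2) (π - α / 2) = k₀ * (1 - Real.cos α) := by
  have hα1 := hα.1; have hα2 := hα.2
  have hpi := Real.pi_pos
  constructor
  · rw [omegaBW, fmax_eq3 α ψ φ' hα hψ hφ, fmin_eq3 α ψ φ' hα hψ hφ]
    have hs : 0 ≤ Real.sin ψ := Real.sin_nonneg_of_nonneg_of_le_pi hψ.1 hψ.2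
    have hs1 : Real.sin ψ ≤ 1 := Real.sin_le_one ψ
    have hc : Real.cos (α / 2 - φ') ≤ -Real.cos α := by
      have h4 : Real.cos (φ' - α / 2) = Real.cos (α / 2 - φ') := by
        rw [← Real.cos_neg (φ' - α / 2)]; ring_nf
      have h5 : Real.cos (φ' - α / 2) ≤ Real.cos (π - α) :=
        Real.cos_le_cos_of_nonneg_of_le_pi (by linarith [hφ.1]) (by linarith [hφ.2])
          (by linarith [hφ.1])
      rw [Real.cos_pi_sub] at h5
      linarith
    have hcc := Real.neg_one_le_cos (α / 2 - φ')
    have key : Real.sin ψ * Real.cos (α / 2 - φ') - -Real.sin ψ ≤ 1 - Real.cos α := by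
      nlinarith
    exact mul_le_mul_of_nonneg_left key hk.le
  · have hψ' : (π / 2 : ℝ) ∈ Set.Icc 0 π := ⟨by linarith, by linarith⟩
    have hφ' : (π - α / 2 : ℝ) ∈ Set.Icc (π - α / 2) π := ⟨le_refl _, by linarith⟩
    rw [omegaBW, fmax_eq3 α (π / 2) (π - α / 2) hα hψ' hφ',
      fmin_eq3 α (π / 2) (π - α / 2) hα hψ' hφ', Real.sin_pi_div_two]
    have : α / 2 - (π - α / 2) = -(π - α) := by ring
    rw [this, Real.cos_neg, Real.cos_pi_sub]
    ring
end
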